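/- Let 𝕂 be ℝ or ℂ, let 𝒜 be an algebra with identity 1 over 𝕂, let τ ∈ 𝒜, and let a : ℕ → 𝕂 be a sequence. Then for each m ∈ ℕ with m ≥ 1 and each n ∈ ℕ, one has (∑_{k=0}^{n} a(n−k) τ^k)·(1 − τ)^m = (−1)^m ∑_{k=0}^{n+m} (Δ^m a)(n+m−k) τ^k + ∑_{j=0}^{m−1} (−1)^j (Δ^j a)(n+j+1) (1 − τ)^{m−1−j}. -/

import Mathlib

/-- The difference operator on sequences in `𝕜`: `(Δa)(0) = a(0)` and
`(Δa)(n) = a(n) − a(n−1)` for `n ≥ 1`. -/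
def dSeqK {𝕜 : Type*} [RCLike 𝕜] (a : ℕ → 𝕜) : ℕ → 𝕜 := fun n =>
  match n with
  | 0 => a 0
  | n + 1 => a (n + 1) - a n

/-!
Multiplying the truncated convolution `∑_{k ≤ n} b(n-k) τ^k` by `1 - τ` telescopes:
it becomes minus the truncated convolution of `Δb` one degree higher, plus the constant
`b(n+1)`. Iterating this `m` times, each step contributes one constant term, which the
remaining factors `(1 - τ)` turn into the boundary sum.
-/

open Finset

section TruncConv

variable {R A : Type*} [CommSemiring R] [Semiring A] [Algebra R A]

def truncConv (τ : A) (b : ℕ → R) (n : ℕ) : A :=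
  ∑ k ∈ range (n + 1), b (n - k) • τ ^ k

theorem truncConv_succ (τ : A) (b : ℕ → R) (n : ℕ) :
    truncConv τ b (n + 1) = truncConv τ b n * τ + b (n + 1) • 1 := by
  simp only [truncConv, sum_range_succ' _ (n + 1), sum_mul, smul_mul_assoc, pow_succ,
    Nat.add_sub_add_right, Nat.sub_zero, pow_zero]

end TruncConv

section DSeqK

variable {𝕜 A : Type*} [RCLike 𝕜] [Ring A] [Algebra 𝕜 A]

theorem dSeqK_zero (a : ℕ → 𝕜) : dSeqK a 0 = a 0 := rfl

theorem dSeqK_succ (a : ℕ → 𝕜) (n : ℕ) : dSeqK a (n + 1) = a (n + 1) - a n := rfl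

theorem truncConv_mul_one_sub (τ : A) (b : ℕ → 𝕜) (n : ℕ) :
    truncConv τ b n * (1 - τ) = -truncConv τ (dSeqK b) (n + 1) + b (n + 1) • 1 := by
  induction n with
  | zero =>
    simp only [truncConv, zero_add, sum_range_succ, sum_range_zero, Nat.sub_zero,
      Nat.sub_self, pow_zero, pow_one, dSeqK_zero, dSeqK_succ, smul_mul_assoc, one_mul]
    module
  | succ n ih =>
    have hcomm : truncConv τ b n * τ * (1 - τ) = truncConv τ b n * (1 - τ) * τ := by
      rw [mul_assoc, mul_assoc, mul_one_sub, one_sub_mul]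
    rw [truncConv_succ, truncConv_succ τ (dSeqK b), add_mul, hcomm, ih, dSeqK_succ]
    simp only [add_mul, neg_mul, smul_mul_assoc, one_mul]
    module

theorem truncConv_mul_one_sub_pow (τ : A) (a : ℕ → 𝕜) (m n : ℕ) :
    truncConv τ a n * (1 - τ) ^ m =
      (-1 : 𝕜) ^ m • truncConv τ (dSeqK^[m] a) (n + m) +
        ∑ j ∈ range m, ((-1 : 𝕜) ^ j * (dSeqK^[j] a) (n + j + 1)) • (1 - τ) ^ (m - 1 - j) := by
  induction m with
  | zero => simp
  | succ m ih =>
    have hpow : ∀ j ∈ range m, (1 - τ) ^ (m - 1 - j) * (1 - τ) = (1 - τ) ^ (m - j) := by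
      intro j hj
      rw [← pow_succ]
      congr 1
      have := mem_range.mp hj
      omega
    rw [pow_succ, ← mul_assoc, ih, add_mul, sum_mul, smul_mul_assoc, truncConv_mul_one_sub,
      ← Function.iterate_succ_apply' dSeqK, sum_range_succ, Nat.add_sub_cancel, Nat.sub_self,
      pow_zero]
    simp only [smul_mul_assoc, Nat.succ_eq_add_one, ← add_assoc]
    rw [sum_congr rfl fun j hj => by rw [hpow j hj]]
    module

end DSeqK

theorem stmt16_general {𝕜 : Type*} [RCLike 𝕜] {A : Type*} [Ring A] [Algebra 𝕜 A]
    (τ : A) (a : ℕ → 𝕜) (m : ℕ) (n : ℕ) :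
    (∑ k ∈ Finset.range (n + 1), a (n - k) • τ ^ k) * (1 - τ) ^ m =
      ((-1 : 𝕜) ^ m) •
          (∑ k ∈ Finset.range (n + m + 1), ((dSeqK (𝕜 := 𝕜))^[m] a) (n + m - k) • τ ^ k) +
        ∑ j ∈ Finset.range m,
          ((-1 : 𝕜) ^ j * ((dSeqK (𝕜 := 𝕜))^[j] a) (n + j + 1)) • (1 - τ) ^ (m - 1 - j) :=
  truncConv_mul_one_sub_pow τ a m n

/-- Lemma 6.4: let `𝕜` be `ℝ` or `ℂ`, let `𝒜` be an algebra with identity over `𝕜`,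
`τ ∈ 𝒜`, and `a : ℕ → 𝕜`.  Then for each `m ≥ 1` and each `n ∈ ℕ`,
`(∑_{k=0}^{n} a(n−k) τ^k)(1 − τ)^m
  = (−1)^m ∑_{k=0}^{n+m} (Δ^m a)(n+m−k) τ^k
    + ∑_{j=0}^{m−1} (−1)^j (Δ^j a)(n+j+1) (1 − τ)^{m−1−j}`. -/
theorem stmt16 {𝕜 : Type*} [RCLike 𝕜] {A : Type*} [Ring A] [Algebra 𝕜 A]
    (τ : A) (a : ℕ → 𝕜) (m : ℕ) (hm : 1 ≤ m) (n : ℕ) :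
    (∑ k ∈ Finset.range (n + 1), a (n - k) • τ ^ k) * (1 - τ) ^ m =
      ((-1 : 𝕜) ^ m) •
          (∑ k ∈ Finset.range (n + m + 1), ((dSeqK (𝕜 := 𝕜))^[m] a) (n + m - k) • τ ^ k) +
        ∑ j ∈ Finset.range m,
          ((-1 : 𝕜) ^ j * ((dSeqK (𝕜 := 𝕜))^[j] a) (n + j + 1)) • (1 - τ) ^ (m - 1 - j) :=
  stmt16_general τ a m n
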